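/- If the minimum cut of G is determined by two tree edges e and e' with e and e' independent in T, and this minimum cut weight is strictly smaller than the weight of every cut determined by a single tree edge, then e is cross-interested in e' and e' is cross-interested in e. -/

import Mathlib

open Finset

/-- Total weight of graph edges with one endpoint in `A` and the other in `B`
(summed over ordered pairs). -/
def betw {V : Type*} [Fintype V] (w : V → V → ℝ) (A B : Finset V) : ℝ :=
  ∑ u ∈ A, ∑ v ∈ B, w u v

/-- Weight of the cut `(S, V \\ S)`: total weight of edges leaving `S`. -/
def cutw {V : Type*} [Fintype V] [DecidableEq V] (w : V → V → ℝ) (S : Finset V) : ℝ :=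
  betw w S Sᶜ

/-! The cut of `Te ∪ Te'` loses exactly the edges between `Te` and `Te'`, counted once from each
side: `w(Te ∪ Te') = w(Te) + w(Te') - 2 w(Te, Te')`. Hence `w(Te ∪ Te') < w(Te)` is the statement
that `e'` is cross-interested in `e`, and symmetrically. -/

section Weights

variable {V : Type*} [Fintype V] (w : V → V → ℝ)

lemma betw_union_left [DecidableEq V] {A B : Finset V} (h : Disjoint A B) (C : Finset V) :
    betw w (A ∪ B) C = betw w A C + betw w B C :=
  sum_union h

lemma betw_sdiff_right [DecidableEq V] (A : Finset V) {B C : Finset V} (h : B ⊆ C) :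
    betw w A (C \ B) = betw w A C - betw w A B := by
  simp only [betw, ← sum_sub_distrib]
  exact sum_congr rfl fun _ _ => sum_sdiff_eq_sub h

lemma betw_comm (hsym : ∀ u v, w u v = w v u) (A B : Finset V) :
    betw w A B = betw w B A := by
  rw [betw, betw, sum_comm]
  simp only [hsym]

variable [DecidableEq V]

lemma cutw_union_of_disjoint {A B : Finset V} (h : Disjoint A B) :
    cutw w (A ∪ B) = cutw w A + cutw w B - betw w A B - betw w B A := by
  have hA : (A ∪ B)ᶜ = Aᶜ \ B := by rw [compl_union, sdiff_eq_inter_compl]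
  have hB : (A ∪ B)ᶜ = Bᶜ \ A := by rw [compl_union, sdiff_eq_inter_compl, inter_comm]
  rw [cutw, betw_union_left w h, hA, betw_sdiff_right w A (subset_compl_iff_disjoint_left.2 h),
    ← hA, hB, betw_sdiff_right w B (subset_compl_iff_disjoint_right.2 h), cutw, cutw]
  ring

lemma cutw_union_of_symm (hsym : ∀ u v, w u v = w v u) {A B : Finset V} (h : Disjoint A B) :
    cutw w (A ∪ B) = cutw w A + cutw w B - 2 * betw w A B := by
  rw [cutw_union_of_disjoint w h, betw_comm w hsym B A]
  ring

end Weights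

theorem stmt_4_general {V : Type*} [Fintype V] [DecidableEq V] (w : V → V → ℝ)
    (hsym : ∀ u v, w u v = w v u)
    (Te Te' : Finset V) (hdisj : Disjoint Te Te')
    (hlt : cutw w (Te ∪ Te') < cutw w Te)
    (hlt' : cutw w (Te ∪ Te') < cutw w Te') :
    cutw w Te < 2 * betw w Te Te' ∧ cutw w Te' < 2 * betw w Te' Te := by
  have hunion := cutw_union_of_symm w hsym hdisj
  have hcomm := betw_comm w hsym Te Te'
  constructor <;> linarith

/-- If the minimum cut is determined by independent tree edges `e, e'` (disjoint
subtrees `Te, Te'`) and is strictly lighter than every cut determined by a single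
tree edge — in particular lighter than `w(Te)` and `w(Te')` — then `e` is
cross-interested in `e'` and vice versa. -/
theorem stmt_4 {V : Type*} [Fintype V] [DecidableEq V] (w : V → V → ℝ)
    (hsym : ∀ u v, w u v = w v u) (hnn : ∀ u v, 0 ≤ w u v)
    (Te Te' : Finset V) (hdisj : Disjoint Te Te')
    (hlt : cutw w (Te ∪ Te') < cutw w Te)
    (hlt' : cutw w (Te ∪ Te') < cutw w Te') :
    cutw w Te < 2 * betw w Te Te' ∧ cutw w Te' < 2 * betw w Te' Te :=
  stmt_4_general w hsym Te Te' hdisj hlt hlt'
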